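/- Let d ≥ 1, α ∈ (0,2), β ∈ (0,1) with α + β ∈ (1,2), and let λ > 0, K > 0. Let (u_t)_{t>0} be a family of twice continuously differentiable functions ℝ^d → ℝ such that (t,x) ↦ u_t(x) is jointly measurable, and for all t > 0: sup_x |u_t(x)| ≤ K, sup_x |Du_t(x)| ≤ K (min(t,1))^{−(1−β)/α}, and sup_x |D²u_t(x)| ≤ K (min(t,1))^{−(2−β)/α}. Then v(x) = ∫₀^∞ e^{−λt} u_t(x) dt defines a bounded continuously differentiable function with bounded gradient, and there exists a constant c > 0, depending only on d, α, β and λ, such that sup_x |Dv(x)| + [Dv]_{α+β−1} ≤ c K. -/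

import Mathlib

/-!
Differentiating under the integral sign, `Dv(x) = ∫₀^∞ e^{-λt} Du_t(x) dt`. The sup bound on `Dv`
holds because `t ↦ e^{-λt} (t ∧ 1)^{-(1-β)/α}` is integrable, as `(1-β)/α < 1`. For the Hölder
bound with `h = |x - y| ≤ 1`, split the integral for `Dv(x) - Dv(y)` at `T = h^α`: below `T` use
the gradient bound on each term separately, which contributes `T^{1-(1-β)/α} = h^{α+β-1}`; above
`T` use the mean value theorem with the second-derivative bound, contributing
`h · T^{1-(2-β)/α} = h^{α+β-1}` since `(2-β)/α > 1`. For `h > 1` the sup bound suffices.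
-/

open MeasureTheory Real
open scoped ENNReal

noncomputable section

/-- The `θ`-Hölder seminorm `[f]_θ` (as the least admissible Hölder constant). -/
def holderSemi {E F : Type*} [NormedAddCommGroup E] [NormedAddCommGroup F]
    (θ : ℝ) (f : E → F) : ℝ :=
  sInf {C : ℝ | 0 ≤ C ∧ ∀ x y, ‖f x - f y‖ ≤ C * ‖x - y‖ ^ θ}

open Filter Topology Set

theorem holderSemi_le {X Y : Type*} [NormedAddCommGroup X] [NormedAddCommGroup Y] {f : X → Y}
    {θ C : ℝ} (hC : 0 ≤ C) (hf : ∀ x y, ‖f x - f y‖ ≤ C * ‖x - y‖ ^ θ) : holderSemi θ f ≤ C :=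
  csInf_le ⟨0, fun _ h => h.1⟩ ⟨hC, hf⟩

theorem continuous_of_norm_sub_le_rpow {X Y : Type*} [SeminormedAddCommGroup X]
    [SeminormedAddCommGroup Y] {f : X → Y} {C θ : ℝ} (hθ : 0 < θ)
    (hf : ∀ x y, ‖f x - f y‖ ≤ C * ‖x - y‖ ^ θ) : Continuous f := by
  refine continuous_iff_continuousAt.mpr fun x => tendsto_iff_norm_sub_tendsto_zero.mpr ?_
  have hlim : Tendsto (fun y => C * ‖y - x‖ ^ θ) (𝓝 x) (𝓝 0) := by
    have := ((continuous_id.sub (continuous_const (y := x))).norm.rpow_const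
      fun _ => Or.inr hθ.le).const_mul C |>.tendsto x
    simpa [zero_rpow hθ.ne'] using this
  exact squeeze_zero (fun _ => norm_nonneg _) (fun y => hf y x) hlim

section Measurability

variable {α : Type*} [MeasurableSpace α] {μ : Measure α}
  {E F : Type*} [NormedAddCommGroup E] [NormedSpace ℝ E]
  [NormedAddCommGroup F] [NormedSpace ℝ F] [MeasurableSpace F] [BorelSpace F]

theorem aemeasurable_continuousLinearMap_of_apply [FiniteDimensional ℝ E] [FiniteDimensional ℝ F]
    {φ : α → E →L[ℝ] F} (h : ∀ v, AEMeasurable (fun a => φ a v) μ) : AEMeasurable φ μ := by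
  let b := Module.finBasis ℝ E
  let evalBasis : (E →L[ℝ] F) →ₗ[ℝ] (Fin (Module.finrank ℝ E) → F) :=
    LinearMap.pi fun i => (ContinuousLinearMap.apply ℝ F (b i)).toLinearMap
  have hinj : LinearMap.ker evalBasis = ⊥ := by
    refine LinearMap.ker_eq_bot'.mpr fun L hL => ?_
    exact ContinuousLinearMap.coe_injective (b.ext fun i => congr_fun hL i)
  refine ((LinearMap.isClosedEmbedding_of_injective hinj).measurableEmbedding
    |>.aemeasurable_comp_iff).mp ?_
  exact aemeasurable_pi_lambda _ fun i => h (b i)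

variable [MeasurableSpace E]

theorem aemeasurable_fderiv_apply [SecondCountableTopology F] {u : α → E → F}
    (hu : Measurable (Function.uncurry u)) {x : E}
    (hdiff : ∀ᵐ a ∂μ, DifferentiableAt ℝ (u a) x) (v : E) :
    AEMeasurable (fun a => fderiv ℝ (u a) x v) μ := by
  refine aemeasurable_of_tendsto_metrizable_ae atTop
    (f := fun (n : ℕ) a => (n : ℝ) • (u a (x + (n : ℝ)⁻¹ • v) - u a x))
    (fun n => ?_) ?_
  · exact (measurable_const.smul ((hu.comp (measurable_id.prodMk measurable_const)).sub
      (hu.comp (measurable_id.prodMk measurable_const)))).aemeasurable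
  · filter_upwards [hdiff] with a ha
    exact ha.hasFDerivAt.lim v (by simpa using tendsto_natCast_atTop_atTop)

variable [FiniteDimensional ℝ E] [FiniteDimensional ℝ F] {u : α → E → F}

theorem aestronglyMeasurable_fderiv (hu : Measurable (Function.uncurry u)) {x : E}
    (hdiff : ∀ᵐ a ∂μ, DifferentiableAt ℝ (u a) x) :
    AEStronglyMeasurable (fun a => fderiv ℝ (u a) x) μ :=
  (aemeasurable_continuousLinearMap_of_apply
    (aemeasurable_fderiv_apply hu hdiff)).aestronglyMeasurable

theorem integrable_fderiv_of_norm_le (hu : Measurable (Function.uncurry u))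
    (hdiff : ∀ᵐ a ∂μ, Differentiable ℝ (u a)) {B : α → ℝ} (hB : Integrable B μ)
    (hDu : ∀ᵐ a ∂μ, ∀ x, ‖fderiv ℝ (u a) x‖ ≤ B a) (x : E) :
    Integrable (fun a => fderiv ℝ (u a) x) μ :=
  hB.mono' (aestronglyMeasurable_fderiv hu (hdiff.mono fun _ h => h x))
    (hDu.mono fun _ h => h x)

theorem hasFDerivAt_integral_of_measurable_uncurry (hu : Measurable (Function.uncurry u))
    (hdiff : ∀ᵐ a ∂μ, Differentiable ℝ (u a)) {x₀ : E} (hint : Integrable (fun a => u a x₀) μ)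
    {B : α → ℝ} (hB : Integrable B μ) (hDu : ∀ᵐ a ∂μ, ∀ x, ‖fderiv ℝ (u a) x‖ ≤ B a) :
    HasFDerivAt (fun x => ∫ a, u a x ∂μ) (∫ a, fderiv ℝ (u a) x₀ ∂μ) x₀ :=
  hasFDerivAt_integral_of_dominated_of_fderiv_le (F := fun x a => u a x) univ_mem
    (Eventually.of_forall fun _ =>
      (hu.comp (measurable_id.prodMk measurable_const)).aestronglyMeasurable)
    hint (aestronglyMeasurable_fderiv hu (hdiff.mono fun _ h => h x₀))
    (hDu.mono fun _ h x _ => h x) hB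
    (hdiff.mono fun _ h x _ => (h x).hasFDerivAt)

end Measurability

section Derivatives

variable {E F : Type*} [NormedAddCommGroup E] [NormedSpace ℝ E]
  [NormedAddCommGroup F] [NormedSpace ℝ F]

theorem norm_fderiv_sub_fderiv_le {f : E → F} (hf : ContDiff ℝ 2 f) {C : ℝ}
    (hC : ∀ z, ‖iteratedFDeriv ℝ 2 f z‖ ≤ C) (x y : E) :
    ‖fderiv ℝ f x - fderiv ℝ f y‖ ≤ C * ‖x - y‖ := by
  have hdiff : Differentiable ℝ (fderiv ℝ f) :=
    (hf.fderiv_right (m := 1) le_rfl).differentiable one_ne_zero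
  refine convex_univ.norm_image_sub_le_of_norm_fderiv_le (fun z _ => hdiff z)
    (fun z _ => ?_) (mem_univ y) (mem_univ x)
  rw [← norm_iteratedFDeriv_one, norm_iteratedFDeriv_fderiv]
  exact hC z

theorem norm_fderiv_const_mul_le {f : E → ℝ} {x : E} {c A : ℝ} (hc : 0 ≤ c)
    (hf : DifferentiableAt ℝ f x) (h : ‖fderiv ℝ f x‖ ≤ A) :
    ‖fderiv ℝ (fun x => c * f x) x‖ ≤ c * A := by
  rw [fderiv_const_mul hf, norm_smul, norm_of_nonneg hc]
  gcongr

theorem norm_fderiv_const_mul_sub_le {f : E → ℝ} {c B : ℝ} (hc : 0 ≤ c) (hf : ContDiff ℝ 2 f)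
    (hB : ∀ z, ‖iteratedFDeriv ℝ 2 f z‖ ≤ B) (x y : E) :
    ‖fderiv ℝ (fun x => c * f x) x - fderiv ℝ (fun x => c * f x) y‖ ≤ c * B * ‖x - y‖ := by
  have hdiff := hf.differentiable two_ne_zero
  rw [fderiv_const_mul (hdiff x), fderiv_const_mul (hdiff y), ← smul_sub, norm_smul,
    norm_of_nonneg hc, mul_assoc]
  gcongr
  exact norm_fderiv_sub_fderiv_le hf hB x y

end Derivatives

section IntegralEstimates

variable {G : Type*} [NormedAddCommGroup G] [NormedSpace ℝ G]

theorem norm_intervalIntegral_zero_le_of_le_rpow {f : ℝ → G} {a e T : ℝ} (he : -1 < e) (hT : 0 ≤ T)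
    (hf : ∀ t ∈ Ioc 0 T, ‖f t‖ ≤ a * t ^ e) :
    ‖∫ t in 0..T, f t‖ ≤ a * T ^ (e + 1) / (e + 1) := by
  calc ‖∫ t in 0..T, f t‖ ≤ ∫ t in 0..T, a * t ^ e :=
        intervalIntegral.norm_integral_le_of_norm_le hT (ae_of_all _ hf)
          ((intervalIntegral.intervalIntegrable_rpow' he).const_mul a)
    _ = a * T ^ (e + 1) / (e + 1) := by
        rw [intervalIntegral.integral_const_mul, integral_rpow (Or.inl he),
          zero_rpow (by linarith), sub_zero, mul_div_assoc]

theorem norm_intervalIntegral_le_of_le_rpow_of_lt_neg_one {f : ℝ → G} {b e T S : ℝ} (he : e < -1)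
    (hT : 0 < T) (hTS : T ≤ S) (hb : 0 ≤ b) (hf : ∀ t ∈ Ioc T S, ‖f t‖ ≤ b * t ^ e) :
    ‖∫ t in T..S, f t‖ ≤ b * T ^ (e + 1) / -(e + 1) := by
  have h0 : (0 : ℝ) ∉ uIcc T S := by
    rw [uIcc_of_le hTS]
    exact fun h => hT.not_ge h.1
  calc ‖∫ t in T..S, f t‖ ≤ ∫ t in T..S, b * t ^ e :=
        intervalIntegral.norm_integral_le_of_norm_le hTS (ae_of_all _ hf)
          ((intervalIntegral.intervalIntegrable_rpow (Or.inr h0)).const_mul b)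
    _ = b * (T ^ (e + 1) - S ^ (e + 1)) / -(e + 1) := by
        rw [intervalIntegral.integral_const_mul, integral_rpow (Or.inr ⟨he.ne, h0⟩),
          mul_div_assoc, div_neg, ← neg_div, neg_sub]
    _ ≤ b * T ^ (e + 1) / -(e + 1) := by
        have := rpow_nonneg (hT.le.trans hTS) (e + 1)
        gcongr
        · linarith
        · linarith

theorem norm_setIntegral_Ioi_le_of_le_exp {f : ℝ → G} {c lam S : ℝ} (hlam : 0 < lam)
    (hf : ∀ t ∈ Ioi S, ‖f t‖ ≤ c * exp (-lam * t)) :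
    ‖∫ t in Ioi S, f t‖ ≤ c * exp (-lam * S) / lam := by
  calc ‖∫ t in Ioi S, f t‖ ≤ ∫ t in Ioi S, c * exp (-lam * t) :=
        norm_integral_le_of_norm_le ((exp_neg_integrableOn_Ioi S hlam).const_mul c)
          (ae_restrict_of_forall_mem measurableSet_Ioi hf)
    _ = c * exp (-lam * S) / lam := by
        rw [integral_const_mul, integral_exp_mul_Ioi (neg_lt_zero.mpr hlam), div_neg, neg_div,
          neg_neg, mul_div_assoc]

theorem norm_setIntegral_Ioi_zero_le_of_split {f : ℝ → G} (hf : IntegrableOn f (Ioi 0))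
    {T a b c e₁ e₂ lam : ℝ} (hT0 : 0 < T) (hT1 : T ≤ 1) (he₁ : -1 < e₁) (he₂ : e₂ < -1)
    (hb : 0 ≤ b) (hc : 0 ≤ c) (hlam : 0 < lam)
    (h₁ : ∀ t ∈ Ioc 0 T, ‖f t‖ ≤ a * t ^ e₁) (h₂ : ∀ t ∈ Ioc T 1, ‖f t‖ ≤ b * t ^ e₂)
    (h₃ : ∀ t ∈ Ioi 1, ‖f t‖ ≤ c * exp (-lam * t)) :
    ‖∫ t in Ioi 0, f t‖ ≤ a * T ^ (e₁ + 1) / (e₁ + 1) + b * T ^ (e₂ + 1) / -(e₂ + 1) + c / lam := by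
  have hsplit :
      ∫ t in Ioi 0, f t = (∫ t in 0..T, f t) + (∫ t in T..1, f t) + ∫ t in Ioi 1, f t := by
    rw [add_assoc, intervalIntegral.integral_interval_add_Ioi (hf.mono_set (Ioi_subset_Ioi hT0.le))
      (hf.mono_set (Ioi_subset_Ioi zero_le_one)), intervalIntegral.integral_interval_add_Ioi hf
      (hf.mono_set (Ioi_subset_Ioi hT0.le))]
  have h₃' : c * exp (-lam * 1) / lam ≤ c / lam :=
    div_le_div_of_nonneg_right (mul_le_of_le_one_right hc (exp_le_one_iff.mpr (by linarith)))
      hlam.le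
  rw [hsplit]
  refine (norm_add₃_le ..).trans (add_le_add (add_le_add ?_ ?_) ?_)
  · exact norm_intervalIntegral_zero_le_of_le_rpow he₁ hT0.le h₁
  · exact norm_intervalIntegral_le_of_le_rpow_of_lt_neg_one he₂ hT0 hT1 hb h₂
  · exact (norm_setIntegral_Ioi_le_of_le_exp hlam h₃).trans h₃'

section Weight

variable {lam K e t : ℝ}

theorem exp_mul_min_rpow_le (hlam : 0 ≤ lam) (hK : 0 ≤ K) (ht : t ∈ Ioc 0 1) :
    exp (-lam * t) * (K * min t 1 ^ e) ≤ K * t ^ e := by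
  rw [min_eq_left ht.2]
  exact mul_le_of_le_one_left (mul_nonneg hK (rpow_nonneg ht.1.le e))
    (exp_le_one_iff.mpr (by nlinarith [ht.1]))

theorem exp_mul_min_rpow_of_one_le (ht : 1 ≤ t) :
    exp (-lam * t) * (K * min t 1 ^ e) = K * exp (-lam * t) := by
  rw [min_eq_right ht, one_rpow, mul_one, mul_comm]

theorem integrableOn_exp_mul_min_rpow (hlam : 0 < lam) (hK : 0 ≤ K) (he : -1 < e) :
    IntegrableOn (fun t => exp (-lam * t) * (K * min t 1 ^ e)) (Ioi 0) := by
  have hmeas : AEStronglyMeasurable (fun t => exp (-lam * t) * (K * min t 1 ^ e)) := by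
    fun_prop
  rw [← Ioc_union_Ioi_eq_Ioi zero_le_one, integrableOn_union]
  constructor
  · refine ((intervalIntegral.intervalIntegrable_rpow' he).const_mul K).1.mono' hmeas.restrict
      (ae_restrict_of_forall_mem measurableSet_Ioc fun t ht => ?_)
    rw [norm_of_nonneg (mul_nonneg (exp_nonneg _)
      (mul_nonneg hK (rpow_nonneg (le_min ht.1.le zero_le_one) e)))]
    exact exp_mul_min_rpow_le hlam.le hK ht
  · refine ((exp_neg_integrableOn_Ioi 1 hlam).const_mul K).mono' hmeas.restrict
      (ae_restrict_of_forall_mem measurableSet_Ioi fun t ht => ?_)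
    rw [exp_mul_min_rpow_of_one_le (le_of_lt ht), norm_of_nonneg (by positivity)]

theorem norm_setIntegral_Ioi_zero_le_of_le_exp_mul_min_rpow {f : ℝ → G}
    (hf : IntegrableOn f (Ioi 0)) (he : -1 < e) (hlam : 0 < lam) (hK : 0 ≤ K)
    (h : ∀ t ∈ Ioi 0, ‖f t‖ ≤ exp (-lam * t) * (K * min t 1 ^ e)) :
    ‖∫ t in Ioi 0, f t‖ ≤ (1 / (e + 1) + 1 / lam) * K := by
  -- split at `T = 1`: the middle piece is empty, so the exponent `-2` plays no role
  have := norm_setIntegral_Ioi_zero_le_of_split hf zero_lt_one le_rfl he (e₂ := -2)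
    (by norm_num) le_rfl hK hlam
    (fun t ht => (h t ht.1).trans (exp_mul_min_rpow_le hlam.le hK ht))
    (fun t ht => absurd ht.2 ht.1.not_ge)
    (fun t ht => (h t (mem_Ioi.mpr (zero_lt_one.trans ht))).trans_eq
      (exp_mul_min_rpow_of_one_le (le_of_lt ht)))
  rw [one_rpow, zero_mul, zero_div, add_zero, mul_one] at this
  linarith [this, show (1 / (e + 1) + 1 / lam) * K = K / (e + 1) + K / lam by ring]

end Weight

section Holder

variable {E : Type*} [NormedAddCommGroup E] {g : ℝ → E → G} {K α θ e₁ e₂ lam : ℝ}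

theorem norm_setIntegral_sub_le_rpow_of_norm_sub_le_one
    (hg : ∀ x, IntegrableOn (fun t => g t x) (Ioi 0))
    (hα : 0 < α) (he₁ : -1 < e₁) (he₂ : e₂ < -1) (hθ₁ : α * (e₁ + 1) = θ)
    (hθ₂ : 1 + α * (e₂ + 1) = θ) (hlam : 0 < lam) (hK : 0 ≤ K)
    (hbound : ∀ t ∈ Ioi 0, ∀ x, ‖g t x‖ ≤ exp (-lam * t) * (K * min t 1 ^ e₁))
    (hlip : ∀ t ∈ Ioi 0, ∀ x y,
      ‖g t x - g t y‖ ≤ exp (-lam * t) * (K * min t 1 ^ e₂) * ‖x - y‖)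
    {x y : E} (hxy : 0 < ‖x - y‖) (hxy₁ : ‖x - y‖ ≤ 1) :
    ‖(∫ t in Ioi 0, g t x) - ∫ t in Ioi 0, g t y‖
      ≤ (2 / (e₁ + 1) + 1 / -(e₂ + 1) + 1 / lam) * K * ‖x - y‖ ^ θ := by
  set h := ‖x - y‖
  -- `T = h ^ α` is the time at which the two bounds on `g t x - g t y` balance
  set T := h ^ α
  have hT0 : 0 < T := rpow_pos_of_pos hxy α
  have hT1 : T ≤ 1 := rpow_le_one hxy.le hxy₁ hα.le
  have hT₁ : T ^ (e₁ + 1) = h ^ θ := by rw [← rpow_mul hxy.le, hθ₁]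
  have hT₂ : h * T ^ (e₂ + 1) = h ^ θ := by
    rw [← rpow_mul hxy.le, ← hθ₂, rpow_add hxy, rpow_one]
  have hh : h ≤ h ^ θ := by
    simpa using rpow_le_rpow_of_exponent_ge hxy hxy₁ (by nlinarith : θ ≤ 1)
  rw [← integral_sub (hg x) (hg y)]
  refine (norm_setIntegral_Ioi_zero_le_of_split ((hg x).sub (hg y)) hT0 hT1 he₁ he₂
    (a := 2 * K) (b := K * h) (c := K * h) (by positivity) (by positivity) hlam ?_ ?_ ?_).trans ?_
  · intro t ht
    have hw := exp_mul_min_rpow_le hlam.le hK ⟨ht.1, ht.2.trans hT1⟩ (e := e₁)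
    calc ‖g t x - g t y‖ ≤ ‖g t x‖ + ‖g t y‖ := norm_sub_le _ _
      _ ≤ 2 * K * t ^ e₁ := by linarith [hbound t ht.1 x, hbound t ht.1 y]
  · intro t ht
    have hw := exp_mul_min_rpow_le hlam.le hK ⟨hT0.trans ht.1, ht.2⟩ (e := e₂)
    calc ‖g t x - g t y‖ ≤ exp (-lam * t) * (K * min t 1 ^ e₂) * h :=
          hlip t (hT0.trans ht.1) x y
      _ ≤ K * t ^ e₂ * h := by gcongr
      _ = K * h * t ^ e₂ := by ring
  · intro t ht
    calc ‖g t x - g t y‖ ≤ exp (-lam * t) * (K * min t 1 ^ e₂) * h :=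
          hlip t (mem_Ioi.mpr (zero_lt_one.trans ht)) x y
      _ = K * h * exp (-lam * t) := by rw [exp_mul_min_rpow_of_one_le (le_of_lt ht)]; ring
  · calc 2 * K * T ^ (e₁ + 1) / (e₁ + 1) + K * h * T ^ (e₂ + 1) / -(e₂ + 1) + K * h / lam
        = (2 / (e₁ + 1) + 1 / -(e₂ + 1)) * K * h ^ θ + 1 / lam * K * h := by
          rw [mul_assoc K h, hT₂, hT₁]; ring
      _ ≤ (2 / (e₁ + 1) + 1 / -(e₂ + 1)) * K * h ^ θ + 1 / lam * K * h ^ θ := by gcongr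
      _ = _ := by ring

theorem norm_setIntegral_sub_le_rpow
    (hg : ∀ x, IntegrableOn (fun t => g t x) (Ioi 0))
    (hα : 0 < α) (he₁ : -1 < e₁) (he₂ : e₂ < -1) (hθ₁ : α * (e₁ + 1) = θ)
    (hθ₂ : 1 + α * (e₂ + 1) = θ) (hlam : 0 < lam) (hK : 0 ≤ K)
    (hbound : ∀ t ∈ Ioi 0, ∀ x, ‖g t x‖ ≤ exp (-lam * t) * (K * min t 1 ^ e₁))
    (hlip : ∀ t ∈ Ioi 0, ∀ x y,
      ‖g t x - g t y‖ ≤ exp (-lam * t) * (K * min t 1 ^ e₂) * ‖x - y‖)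
    (x y : E) :
    ‖(∫ t in Ioi 0, g t x) - ∫ t in Ioi 0, g t y‖
      ≤ (2 / (e₁ + 1) + 1 / -(e₂ + 1) + 2 / lam) * K * ‖x - y‖ ^ θ := by
  have he₁' : 0 < e₁ + 1 := by linarith
  have he₂' : 0 < -(e₂ + 1) := by linarith
  have hθ : 0 < θ := hθ₁ ▸ mul_pos hα he₁'
  rcases eq_or_ne x y with rfl | hxy
  · simp [zero_rpow hθ.ne']
  have hpos : 0 < ‖x - y‖ := norm_pos_iff.mpr (sub_ne_zero.mpr hxy)
  rcases le_or_gt ‖x - y‖ 1 with hle | hgt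
  · refine (norm_setIntegral_sub_le_rpow_of_norm_sub_le_one hg hα he₁ he₂ hθ₁ hθ₂ hlam hK
      hbound hlip hpos hle).trans ?_
    gcongr
    linarith
  · have hsup := fun x => norm_setIntegral_Ioi_zero_le_of_le_exp_mul_min_rpow (hg x) he₁ hlam hK
      fun t ht => hbound t ht x
    have h1 : 1 ≤ ‖x - y‖ ^ θ := one_le_rpow hgt.le hθ.le
    calc ‖(∫ t in Ioi 0, g t x) - ∫ t in Ioi 0, g t y‖
        ≤ ‖∫ t in Ioi 0, g t x‖ + ‖∫ t in Ioi 0, g t y‖ := norm_sub_le _ _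
      _ ≤ 2 * ((1 / (e₁ + 1) + 1 / lam) * K) := by linarith [hsup x, hsup y]
      _ ≤ (2 / (e₁ + 1) + 1 / -(e₂ + 1) + 2 / lam) * K * 1 := by
          have : 0 ≤ 1 / -(e₂ + 1) * K := by positivity
          linarith [show (2 / (e₁ + 1) + 1 / -(e₂ + 1) + 2 / lam) * K * 1
            = 2 * ((1 / (e₁ + 1) + 1 / lam) * K) + 1 / -(e₂ + 1) * K by ring]
      _ ≤ (2 / (e₁ + 1) + 1 / -(e₂ + 1) + 2 / lam) * K * ‖x - y‖ ^ θ := by gcongr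

end Holder

end IntegralEstimates

section LaplaceTransform

variable {E : Type*} {u : ℝ → E → ℝ} {lam K e : ℝ}

theorem norm_exp_mul_le (hb0 : ∀ t : ℝ, 0 < t → ∀ x, |u t x| ≤ K) (x : E) :
    ∀ t ∈ Ioi 0, ‖exp (-lam * t) * u t x‖ ≤ K * exp (-lam * t) := fun t ht => by
  rw [norm_mul, norm_of_nonneg (exp_nonneg _), norm_eq_abs, mul_comm]
  exact mul_le_mul_of_nonneg_right (hb0 t ht x) (exp_nonneg _)

theorem abs_setIntegral_exp_mul_le (hb0 : ∀ t : ℝ, 0 < t → ∀ x, |u t x| ≤ K) (hlam : 0 < lam)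
    (x : E) : |∫ t in Ioi 0, exp (-lam * t) * u t x| ≤ K / lam := by
  simpa using norm_setIntegral_Ioi_le_of_le_exp hlam (norm_exp_mul_le hb0 x)

theorem measurable_exp_mul_uncurry [MeasurableSpace E] (hu : Measurable (Function.uncurry u)) :
    Measurable fun p : ℝ × E => exp (-lam * p.1) * u p.1 p.2 :=
  (by fun_prop : Measurable fun p : ℝ × E => exp (-lam * p.1)).mul hu

variable [NormedAddCommGroup E] [NormedSpace ℝ E]

theorem norm_fderiv_exp_mul_le (hdiff : ∀ t : ℝ, 0 < t → Differentiable ℝ (u t))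
    (hb1 : ∀ t : ℝ, 0 < t → ∀ x, ‖fderiv ℝ (u t) x‖ ≤ K * min t 1 ^ e) :
    ∀ t ∈ Ioi 0, ∀ x,
      ‖fderiv ℝ (fun x => exp (-lam * t) * u t x) x‖ ≤ exp (-lam * t) * (K * min t 1 ^ e) :=
  fun t ht x => norm_fderiv_const_mul_le (exp_nonneg _) (hdiff t ht x) (hb1 t ht x)

variable [FiniteDimensional ℝ E] [MeasurableSpace E]

theorem integrableOn_fderiv_exp_mul (hu : Measurable (Function.uncurry u))
    (hdiff : ∀ t : ℝ, 0 < t → Differentiable ℝ (u t))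
    (hb1 : ∀ t : ℝ, 0 < t → ∀ x, ‖fderiv ℝ (u t) x‖ ≤ K * min t 1 ^ e)
    (hlam : 0 < lam) (hK : 0 ≤ K) (he : -1 < e) (x : E) :
    IntegrableOn (fun t => fderiv ℝ (fun x => exp (-lam * t) * u t x) x) (Ioi 0) :=
  integrable_fderiv_of_norm_le (measurable_exp_mul_uncurry hu)
    (ae_restrict_of_forall_mem measurableSet_Ioi fun t ht => (hdiff t ht).const_mul _)
    (integrableOn_exp_mul_min_rpow hlam hK he)
    (ae_restrict_of_forall_mem measurableSet_Ioi (norm_fderiv_exp_mul_le hdiff hb1)) x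

theorem hasFDerivAt_setIntegral_exp_mul (hu : Measurable (Function.uncurry u))
    (hdiff : ∀ t : ℝ, 0 < t → Differentiable ℝ (u t)) (hb0 : ∀ t : ℝ, 0 < t → ∀ x, |u t x| ≤ K)
    (hb1 : ∀ t : ℝ, 0 < t → ∀ x, ‖fderiv ℝ (u t) x‖ ≤ K * min t 1 ^ e)
    (hlam : 0 < lam) (hK : 0 ≤ K) (he : -1 < e) (x : E) :
    HasFDerivAt (fun x => ∫ t in Ioi 0, exp (-lam * t) * u t x)
      (∫ t in Ioi 0, fderiv ℝ (fun x => exp (-lam * t) * u t x) x) x :=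
  hasFDerivAt_integral_of_measurable_uncurry (measurable_exp_mul_uncurry hu)
    (ae_restrict_of_forall_mem measurableSet_Ioi fun t ht => (hdiff t ht).const_mul _)
    (((exp_neg_integrableOn_Ioi 0 hlam).const_mul K).mono'
      ((measurable_exp_mul_uncurry hu).comp
        (measurable_id.prodMk measurable_const)).aestronglyMeasurable
      (ae_restrict_of_forall_mem measurableSet_Ioi (norm_exp_mul_le hb0 x)))
    (integrableOn_exp_mul_min_rpow hlam hK he)
    (ae_restrict_of_forall_mem measurableSet_Ioi (norm_fderiv_exp_mul_le hdiff hb1))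

theorem norm_fderiv_setIntegral_exp_mul_le (hu : Measurable (Function.uncurry u))
    (hdiff : ∀ t : ℝ, 0 < t → Differentiable ℝ (u t)) (hb0 : ∀ t : ℝ, 0 < t → ∀ x, |u t x| ≤ K)
    (hb1 : ∀ t : ℝ, 0 < t → ∀ x, ‖fderiv ℝ (u t) x‖ ≤ K * min t 1 ^ e)
    (hlam : 0 < lam) (hK : 0 ≤ K) (he : -1 < e) (x : E) :
    ‖fderiv ℝ (fun x => ∫ t in Ioi 0, exp (-lam * t) * u t x) x‖
      ≤ (1 / (e + 1) + 1 / lam) * K := by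
  rw [(hasFDerivAt_setIntegral_exp_mul hu hdiff hb0 hb1 hlam hK he x).fderiv]
  exact norm_setIntegral_Ioi_zero_le_of_le_exp_mul_min_rpow
    (integrableOn_fderiv_exp_mul hu hdiff hb1 hlam hK he x) he hlam hK
    fun t ht => norm_fderiv_exp_mul_le hdiff hb1 t ht x

theorem norm_fderiv_setIntegral_exp_mul_sub_le {α θ e₁ e₂ : ℝ}
    (hu : Measurable (Function.uncurry u)) (hC2 : ∀ t : ℝ, 0 < t → ContDiff ℝ 2 (u t))
    (hb0 : ∀ t : ℝ, 0 < t → ∀ x, |u t x| ≤ K)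
    (hb1 : ∀ t : ℝ, 0 < t → ∀ x, ‖fderiv ℝ (u t) x‖ ≤ K * min t 1 ^ e₁)
    (hb2 : ∀ t : ℝ, 0 < t → ∀ x, ‖iteratedFDeriv ℝ 2 (u t) x‖ ≤ K * min t 1 ^ e₂)
    (hα : 0 < α) (he₁ : -1 < e₁) (he₂ : e₂ < -1) (hθ₁ : α * (e₁ + 1) = θ)
    (hθ₂ : 1 + α * (e₂ + 1) = θ) (hlam : 0 < lam) (hK : 0 ≤ K) (x y : E) :
    ‖fderiv ℝ (fun x => ∫ t in Ioi 0, exp (-lam * t) * u t x) x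
      - fderiv ℝ (fun x => ∫ t in Ioi 0, exp (-lam * t) * u t x) y‖
      ≤ (2 / (e₁ + 1) + 1 / -(e₂ + 1) + 2 / lam) * K * ‖x - y‖ ^ θ := by
  have hdiff (t : ℝ) (ht : 0 < t) := (hC2 t ht).differentiable two_ne_zero
  rw [(hasFDerivAt_setIntegral_exp_mul hu hdiff hb0 hb1 hlam hK he₁ x).fderiv,
    (hasFDerivAt_setIntegral_exp_mul hu hdiff hb0 hb1 hlam hK he₁ y).fderiv]
  exact norm_setIntegral_sub_le_rpow (integrableOn_fderiv_exp_mul hu hdiff hb1 hlam hK he₁)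
    hα he₁ he₂ hθ₁ hθ₂ hlam hK (norm_fderiv_exp_mul_le hdiff hb1)
    (fun t ht x y => norm_fderiv_const_mul_sub_le (exp_nonneg _) (hC2 t ht) (hb2 t ht) x y) x y

end LaplaceTransform

theorem laplace_transform_holder_estimate_general
    (d : ℕ) (α β lam : ℝ) (hα : 0 < α ∧ α < 2)
    (hαβ : 1 < α + β ∧ α + β < 2) (hlam : 0 < lam) :
    ∃ c : ℝ, 0 < c ∧
      ∀ K : ℝ, 0 < K →
        ∀ u : ℝ → EuclideanSpace ℝ (Fin d) → ℝ,
          Measurable (Function.uncurry u) →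
          (∀ t : ℝ, 0 < t → ContDiff ℝ 2 (u t)) →
          (∀ t : ℝ, 0 < t → ∀ x, |u t x| ≤ K) →
          (∀ t : ℝ, 0 < t → ∀ x, ‖fderiv ℝ (u t) x‖ ≤ K * (min t 1) ^ (-(1 - β) / α)) →
          (∀ t : ℝ, 0 < t → ∀ x,
            ‖iteratedFDeriv ℝ 2 (u t) x‖ ≤ K * (min t 1) ^ (-(2 - β) / α)) →
          (ContDiff ℝ 1 (fun x => ∫ t in Set.Ioi (0 : ℝ), Real.exp (-lam * t) * u t x) ∧
            (∃ M, ∀ x, |∫ t in Set.Ioi (0 : ℝ), Real.exp (-lam * t) * u t x| ≤ M) ∧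
            (∃ M, ∀ x, ‖fderiv ℝ
              (fun x => ∫ t in Set.Ioi (0 : ℝ), Real.exp (-lam * t) * u t x) x‖ ≤ M) ∧
            (⨆ x, ‖fderiv ℝ
                (fun x => ∫ t in Set.Ioi (0 : ℝ), Real.exp (-lam * t) * u t x) x‖) +
              holderSemi (α + β - 1) (fun x => fderiv ℝ
                (fun x => ∫ t in Set.Ioi (0 : ℝ), Real.exp (-lam * t) * u t x) x) ≤
              c * K) := by
  obtain ⟨hα0, -⟩ := hα
  have he₁ : -1 < -(1 - β) / α := by
    rw [neg_div, neg_lt_neg_iff, div_lt_one hα0]; linarith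
  have he₂ : -(2 - β) / α < -1 := by
    rw [neg_div, neg_lt_neg_iff, one_lt_div hα0]; linarith
  have hθ₁ : α * (-(1 - β) / α + 1) = α + β - 1 := by field_simp; ring
  have hθ₂ : 1 + α * (-(2 - β) / α + 1) = α + β - 1 := by field_simp; ring
  set e₁ := -(1 - β) / α
  set e₂ := -(2 - β) / α
  have he₁' : 0 < e₁ + 1 := by linarith
  have he₂' : 0 < -(e₂ + 1) := by linarith
  refine ⟨(1 / (e₁ + 1) + 1 / lam) + (2 / (e₁ + 1) + 1 / -(e₂ + 1) + 2 / lam), by positivity,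
    fun K hK u hu hC2 hb0 hb1 hb2 => ?_⟩
  have hdiff (t : ℝ) (ht : 0 < t) := (hC2 t ht).differentiable two_ne_zero
  have hv := hasFDerivAt_setIntegral_exp_mul hu hdiff hb0 hb1 hlam hK.le he₁
  have hsup := norm_fderiv_setIntegral_exp_mul_le hu hdiff hb0 hb1 hlam hK.le he₁
  have hhol := norm_fderiv_setIntegral_exp_mul_sub_le hu hC2 hb0 hb1 hb2 hα0 he₁ he₂ hθ₁ hθ₂
    hlam hK.le
  refine ⟨contDiff_one_iff_fderiv.mpr ⟨fun x => (hv x).differentiableAt,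
      continuous_of_norm_sub_le_rpow (by linarith) hhol⟩,
    ⟨K / lam, abs_setIntegral_exp_mul_le hb0 hlam⟩, ⟨_, hsup⟩, ?_⟩
  linarith [ciSup_le hsup, holderSemi_le (by positivity) hhol]

/-- if `(u_t)` satisfies `‖u_t‖_∞ ≤ K`, `‖Du_t‖_∞ ≤ K (t∧1)^{-(1-β)/α}` and
`‖D²u_t‖_∞ ≤ K (t∧1)^{-(2-β)/α}`, then `v = ∫₀^∞ e^{-λt} u_t dt` is bounded `C¹` with
bounded gradient and `‖Dv‖_∞ + [Dv]_{α+β-1} ≤ c K` where `c = c(d,α,β,λ)`. -/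
theorem laplace_transform_holder_estimate
    (d : ℕ) (hd : 1 ≤ d) (α β lam : ℝ) (hα : 0 < α ∧ α < 2) (hβ : 0 < β ∧ β < 1)
    (hαβ : 1 < α + β ∧ α + β < 2) (hlam : 0 < lam) :
    ∃ c : ℝ, 0 < c ∧
      ∀ K : ℝ, 0 < K →
        ∀ u : ℝ → EuclideanSpace ℝ (Fin d) → ℝ,
          Measurable (Function.uncurry u) →
          (∀ t : ℝ, 0 < t → ContDiff ℝ 2 (u t)) →
          (∀ t : ℝ, 0 < t → ∀ x, |u t x| ≤ K) →
          (∀ t : ℝ, 0 < t → ∀ x, ‖fderiv ℝ (u t) x‖ ≤ K * (min t 1) ^ (-(1 - β) / α)) →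
          (∀ t : ℝ, 0 < t → ∀ x,
            ‖iteratedFDeriv ℝ 2 (u t) x‖ ≤ K * (min t 1) ^ (-(2 - β) / α)) →
          (ContDiff ℝ 1 (fun x => ∫ t in Set.Ioi (0 : ℝ), Real.exp (-lam * t) * u t x) ∧
            (∃ M, ∀ x, |∫ t in Set.Ioi (0 : ℝ), Real.exp (-lam * t) * u t x| ≤ M) ∧
            (∃ M, ∀ x, ‖fderiv ℝ
              (fun x => ∫ t in Set.Ioi (0 : ℝ), Real.exp (-lam * t) * u t x) x‖ ≤ M) ∧
            (⨆ x, ‖fderiv ℝ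
                (fun x => ∫ t in Set.Ioi (0 : ℝ), Real.exp (-lam * t) * u t x) x‖) +
              holderSemi (α + β - 1) (fun x => fderiv ℝ
                (fun x => ∫ t in Set.Ioi (0 : ℝ), Real.exp (-lam * t) * u t x) x) ≤
              c * K) :=
  laplace_transform_holder_estimate_general d α β lam hα hαβ hlam
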